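/- Let $n\ge 2$ and $0\le k\le n$ be integers, $h\in\mathbb{R}$, $c>0$, and let $g:(a_1,a_2)\to\mathbb{R}$ be differentiable with $0<g(t)<\sqrt{c}$, $g'(t)\ne 0$, and $(g'(t))^2 = c - g(t)^2 - g(t)^2\,(h+g(t)^{-n})^2$ for all $t$. Set $\lambda = h+g^{-n}$, $r = g/\sqrt{c}$, fix $t_0\in(a_1,a_2)$ and let $\theta(t)=\int_{t_0}^t \frac{r(\tau)\lambda(\tau)}{1-r(\tau)^2}\,d\tau$. Let $B_2(s)\in\mathbb{R}^{n+2}$ have $\cos s$ in coordinate $n+1$, $\sin s$ in coordinate $n+2$ and $0$ elsewhere, and $B_3(s)$ have $-\sin s$ in coordinate $n+1$, $\cos s$ in coordinate $n+2$ and $0$ elsewhere. Then $(r')^2 + r^2\lambda^2 = 1 - r^2$ on $(a_1,a_2)$, and for every $y\in\mathbb{R}^{n+2}$ with $y_{n+1}=y_{n+2}=0$ and $\langle y,y\rangle = 1$, the curves $\phi(u) = r(u)\,y + \sqrt{1-r(u)^2}\,B_2(\theta(u))$ and $\nu(u) = -r(u)\lambda(u)\,y + \frac{r(u)^2\lambda(u)}{\sqrt{1-r(u)^2}}\,B_2(\theta(u))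 + \frac{r'(u)}{\sqrt{1-r(u)^2}}\,B_3(\theta(u))$ satisfy: $\langle\phi,\phi\rangle\equiv 1$, $\langle\phi',\phi'\rangle\equiv 1$, $\langle\nu,\nu\rangle\equiv 1$, $\langle\nu,\phi'\rangle\equiv 0$, $\langle\nu(u),v\rangle = 0$ for every $v\in\mathbb{R}^{n+2}$ with $v_{n+1}=v_{n+2}=0$ and $\langle v,y\rangle = 0$, and $\nu'(u) = -(nh-(n-1)\lambda(u))\,\phi'(u)$ for all $u$. -/

import Mathlib

/-- The semi-riemannian bilinear form of index `k` on `ℝ^m`: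
`⟨v,w⟩ = -v₁w₁ - ⋯ - v_k w_k + v_{k+1} w_{k+1} + ⋯ + v_m w_m`
(coordinates are 0-indexed in Lean, so the first `k` indices carry sign `-1`). -/
noncomputable def semiForm (k : ℕ) {m : ℕ} (v w : Fin m → ℝ) : ℝ :=
  ∑ i : Fin m, (if (i : ℕ) < k then (-1 : ℝ) else 1) * v i * w i

/-! With `r = g/√c` the equation for `g` becomes the first integral `r'² + r²λ² = 1 - r²`, and
`λ = h + g⁻ⁿ` satisfies `r λ' = -n (λ - h) r'`. Since `g'` never vanishes, Darboux's theorem gives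
it a constant sign, so `r' = ±√(1 - r² - r²λ²)` is differentiable, and differentiating the first
integral gives `r'' = -r (1 + λ²) + n r λ (λ - h)`. Both curves are written in the moving frame
`(y, B₂ θ, B₃ θ)`, which is orthonormal for `⟨·,·⟩` and satisfies `B₂' = θ' B₃`, `B₃' = -θ' B₂`;
every claim then reduces to an identity between frame coefficients that follows from these two
relations. -/

open Real Filter Topology

section SemiForm

variable {k m : ℕ}

lemma semiForm_comm (v w : Fin m → ℝ) : semiForm k v w = semiForm k w v := by
  simp only [semiForm, mul_right_comm _ (v _)]

lemma semiForm_add_left (u v w : Fin m → ℝ) :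
    semiForm k (u + v) w = semiForm k u w + semiForm k v w := by
  simp only [semiForm, ← Finset.sum_add_distrib, Pi.add_apply]
  exact Finset.sum_congr rfl fun _ _ => by ring

lemma semiForm_smul_left (a : ℝ) (v w : Fin m → ℝ) :
    semiForm k (a • v) w = a * semiForm k v w := by
  simp only [semiForm, Finset.mul_sum, Pi.smul_apply, smul_eq_mul]
  exact Finset.sum_congr rfl fun _ _ => by ring

lemma semiForm_add_right (u v w : Fin m → ℝ) :
    semiForm k u (v + w) = semiForm k u v + semiForm k u w := by
  rw [semiForm_comm, semiForm_add_left, semiForm_comm v, semiForm_comm w]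

lemma semiForm_smul_right (a : ℝ) (v w : Fin m → ℝ) :
    semiForm k v (a • w) = a * semiForm k v w := by
  rw [semiForm_comm, semiForm_smul_left, semiForm_comm]

end SemiForm

noncomputable def circleVec (n : ℕ) (s : ℝ) : Fin (n + 2) → ℝ :=
  fun i => if (i : ℕ) = n then cos s else if (i : ℕ) = n + 1 then sin s else 0

noncomputable def circleTangent (n : ℕ) (s : ℝ) : Fin (n + 2) → ℝ :=
  fun i => if (i : ℕ) = n then -sin s else if (i : ℕ) = n + 1 then cos s else 0

section CircleFrame

variable {n k : ℕ} {y : Fin (n + 2) → ℝ}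

lemma semiForm_eq_of_support_last_two (hk : k ≤ n) {v : Fin (n + 2) → ℝ}
    (hv : ∀ i : Fin (n + 2), (i : ℕ) ≠ n → (i : ℕ) ≠ n + 1 → v i = 0) (w : Fin (n + 2) → ℝ) :
    semiForm k v w =
      v ⟨n, by omega⟩ * w ⟨n, by omega⟩ + v ⟨n + 1, by omega⟩ * w ⟨n + 1, by omega⟩ := by
  rw [semiForm, Fintype.sum_eq_add ⟨n, by omega⟩ ⟨n + 1, by omega⟩ (by simp)]
  · simp only [if_neg (show ¬ n < k by omega), if_neg (show ¬ n + 1 < k by omega), one_mul]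
  · rintro i ⟨hin, hin1⟩
    rw [hv i (fun h => hin (Fin.ext h)) (fun h => hin1 (Fin.ext h)), mul_zero, zero_mul]

lemma semiForm_circleVec_left (hk : k ≤ n) (s : ℝ) (w : Fin (n + 2) → ℝ) :
    semiForm k (circleVec n s) w =
      cos s * w ⟨n, by omega⟩ + sin s * w ⟨n + 1, by omega⟩ := by
  rw [semiForm_eq_of_support_last_two hk (fun i h₁ h₂ => by simp [circleVec, h₁, h₂])]
  simp [circleVec]

lemma semiForm_circleTangent_left (hk : k ≤ n) (s : ℝ) (w : Fin (n + 2) → ℝ) :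
    semiForm k (circleTangent n s) w =
      -sin s * w ⟨n, by omega⟩ + cos s * w ⟨n + 1, by omega⟩ := by
  rw [semiForm_eq_of_support_last_two hk (fun i h₁ h₂ => by simp [circleTangent, h₁, h₂])]
  simp [circleTangent]

lemma semiForm_circleVec_self (hk : k ≤ n) (s : ℝ) :
    semiForm k (circleVec n s) (circleVec n s) = 1 := by
  simp [semiForm_circleVec_left hk, circleVec, ← sq]

lemma semiForm_circleVec_circleTangent (hk : k ≤ n) (s : ℝ) :
    semiForm k (circleVec n s) (circleTangent n s) = 0 := by
  simp [semiForm_circleVec_left hk, circleTangent, mul_comm]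

lemma semiForm_circleTangent_self (hk : k ≤ n) (s : ℝ) :
    semiForm k (circleTangent n s) (circleTangent n s) = 1 := by
  simp [semiForm_circleTangent_left hk, circleTangent, ← sq]

lemma semiForm_circleVec_left_eq_zero (hk : k ≤ n) (s : ℝ)
    (hy : ∀ i : Fin (n + 2), ((i : ℕ) = n ∨ (i : ℕ) = n + 1) → y i = 0) :
    semiForm k (circleVec n s) y = 0 := by
  simp [semiForm_circleVec_left hk, hy]

lemma semiForm_circleTangent_left_eq_zero (hk : k ≤ n) (s : ℝ)
    (hy : ∀ i : Fin (n + 2), ((i : ℕ) = n ∨ (i : ℕ) = n + 1) → y i = 0) :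
    semiForm k (circleTangent n s) y = 0 := by
  simp [semiForm_circleTangent_left hk, hy]

end CircleFrame

noncomputable def frameVec {n : ℕ} (y : Fin (n + 2) → ℝ) (s a b c : ℝ) : Fin (n + 2) → ℝ :=
  a • y + b • circleVec n s + c • circleTangent n s

section Frame

variable {n k : ℕ} {y : Fin (n + 2) → ℝ}

lemma semiForm_frameVec (hk : k ≤ n)
    (hy : ∀ i : Fin (n + 2), ((i : ℕ) = n ∨ (i : ℕ) = n + 1) → y i = 0) (s a b c a' b' c' : ℝ) :
    semiForm k (frameVec y s a b c) (frameVec y s a' b' c') =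
      a * a' * semiForm k y y + b * b' + c * c' := by
  simp only [frameVec, semiForm_add_left, semiForm_add_right, semiForm_smul_left,
    semiForm_smul_right, semiForm_circleVec_self hk, semiForm_circleTangent_self hk,
    semiForm_circleVec_circleTangent hk, semiForm_comm y (circleVec n s),
    semiForm_comm y (circleTangent n s), semiForm_comm (circleTangent n s) (circleVec n s),
    semiForm_circleVec_left_eq_zero hk s hy, semiForm_circleTangent_left_eq_zero hk s hy]
  ring

lemma semiForm_frameVec_left_of_vanishing (hk : k ≤ n) {v : Fin (n + 2) → ℝ}
    (hv : ∀ i : Fin (n + 2), ((i : ℕ) = n ∨ (i : ℕ) = n + 1) → v i = 0) (s a b c : ℝ) :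
    semiForm k (frameVec y s a b c) v = a * semiForm k y v := by
  simp only [frameVec, semiForm_add_left, semiForm_smul_left,
    semiForm_circleVec_left_eq_zero hk s hv, semiForm_circleTangent_left_eq_zero hk s hv]
  ring

lemma frameVec_smul (μ s a b c : ℝ) :
    μ • frameVec y s a b c = frameVec y s (μ * a) (μ * b) (μ * c) := by
  simp only [frameVec, smul_add, smul_smul]

lemma hasDerivAt_circleVec {θ : ℝ → ℝ} {θ' u : ℝ} (hθ : HasDerivAt θ θ' u) :
    HasDerivAt (fun t => circleVec n (θ t)) (θ' • circleTangent n (θ u)) u := by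
  refine hasDerivAt_pi.2 fun i => ?_
  simp only [circleVec, circleTangent, Pi.smul_apply, smul_eq_mul]
  split_ifs
  · simpa [mul_comm] using hθ.cos
  · simpa [mul_comm] using hθ.sin
  · simpa using hasDerivAt_const u (0 : ℝ)

lemma hasDerivAt_circleTangent {θ : ℝ → ℝ} {θ' u : ℝ} (hθ : HasDerivAt θ θ' u) :
    HasDerivAt (fun t => circleTangent n (θ t)) (-θ' • circleVec n (θ u)) u := by
  refine hasDerivAt_pi.2 fun i => ?_
  simp only [circleVec, circleTangent, Pi.smul_apply, smul_eq_mul]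
  split_ifs
  · simpa [mul_comm] using hθ.sin.fun_neg
  · simpa [mul_comm] using hθ.cos
  · simpa using hasDerivAt_const u (0 : ℝ)

lemma HasDerivAt.frameVec {θ a b c : ℝ → ℝ} {θ' a' b' c' u : ℝ} (hθ : HasDerivAt θ θ' u)
    (ha : HasDerivAt a a' u) (hb : HasDerivAt b b' u) (hc : HasDerivAt c c' u) :
    HasDerivAt (fun t => frameVec y (θ t) (a t) (b t) (c t))
      (frameVec y (θ u) a' (b' - c u * θ') (c' + b u * θ')) u := by
  refine (((ha.smul_const y).fun_add (hb.fun_smul (hasDerivAt_circleVec hθ))).fun_add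
    (hc.fun_smul (hasDerivAt_circleTangent hθ))).congr_deriv ?_
  simp only [_root_.frameVec]
  module

lemma semiForm_frameVec_orthonormal (hk : k ≤ n)
    (hy : ∀ i : Fin (n + 2), ((i : ℕ) = n ∨ (i : ℕ) = n + 1) → y i = 0)
    (hyy : semiForm k y y = 1) {s r q lam : ℝ} (hr1 : r ^ 2 < 1)
    (hint : q ^ 2 + r ^ 2 * lam ^ 2 = 1 - r ^ 2) :
    let φ := frameVec y s r √(1 - r ^ 2) 0
    let φ' := frameVec y s q (-(r * q) / √(1 - r ^ 2)) (r * lam / √(1 - r ^ 2))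
    let ν := frameVec y s (-(r * lam)) (r ^ 2 * lam / √(1 - r ^ 2)) (q / √(1 - r ^ 2))
    semiForm k φ φ = 1 ∧ semiForm k φ' φ' = 1 ∧ semiForm k ν ν = 1 ∧ semiForm k ν φ' = 0 := by
  have hs2 : √(1 - r ^ 2) ^ 2 = 1 - r ^ 2 := sq_sqrt (by linarith)
  have hs0 : √(1 - r ^ 2) ≠ 0 := (sqrt_pos.2 (by linarith)).ne'
  simp only [semiForm_frameVec hk hy, hyy]
  refine ⟨by linear_combination hs2, ?_, ?_, ?_⟩ <;> field_simp <;> rw [hs2]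
  · linear_combination hint
  · linear_combination hint
  · ring

end Frame

section ScalarODE

lemma differentiableAt_deriv_of_deriv_sq_eq {s : Set ℝ} (hs : Convex ℝ s) (hso : IsOpen s)
    {f F : ℝ → ℝ} (hf : ∀ t ∈ s, DifferentiableAt ℝ f t) (hf' : ∀ t ∈ s, deriv f t ≠ 0)
    (hF : ∀ t ∈ s, deriv f t ^ 2 = F t) (hFd : ∀ t ∈ s, DifferentiableAt ℝ F t) {t : ℝ}
    (ht : t ∈ s) : DifferentiableAt ℝ (deriv f) t := by
  -- By Darboux, `deriv f` has constant sign on `s`, so it is `√F` or `-√F` there.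
  obtain ⟨ε, hε⟩ : ∃ ε : ℝ, ∀ x ∈ s, deriv f x = ε * √(F x) := by
    rcases hasDerivWithinAt_forall_lt_or_forall_gt_of_forall_ne hs
      (fun x hx => (hf x hx).hasDerivAt.hasDerivWithinAt) hf' with hneg | hpos
    · exact ⟨-1, fun x hx => by rw [← hF x hx, sqrt_sq_eq_abs, abs_of_neg (hneg x hx)]; ring⟩
    · exact ⟨1, fun x hx => by rw [← hF x hx, sqrt_sq_eq_abs, abs_of_pos (hpos x hx)]; ring⟩
  have hF0 : F t ≠ 0 := hF t ht ▸ pow_ne_zero 2 (hf' t ht)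
  exact (((hFd t ht).sqrt hF0).const_mul ε).congr_of_eventuallyEq
    (eventually_of_mem (hso.mem_nhds ht) hε)

lemma deriv_mul_deriv_deriv_of_first_integral {r lam : ℝ → ℝ} {t lam' r'' : ℝ}
    (hr : DifferentiableAt ℝ r t) (hlam : HasDerivAt lam lam' t)
    (hr' : HasDerivAt (deriv r) r'' t)
    (hint : ∀ᶠ x in 𝓝 t, deriv r x ^ 2 + r x ^ 2 * lam x ^ 2 = 1 - r x ^ 2) :
    deriv r t * r'' = -(r t * deriv r t) * (1 + lam t ^ 2) - r t ^ 2 * lam t * lam' := by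
  have hL := (hr'.fun_pow 2).fun_add ((hr.hasDerivAt.fun_pow 2).fun_mul (hlam.fun_pow 2))
  have hR := (hasDerivAt_const t (1 : ℝ)).fun_sub (hr.hasDerivAt.fun_pow 2)
  have := hL.unique (hR.congr_of_eventuallyEq hint)
  push_cast at this
  linear_combination this / 2

lemma hasDerivAt_integral_of_continuousOn {E : Type*} [NormedAddCommGroup E] [NormedSpace ℝ E]
    [CompleteSpace E] {f : ℝ → E} {s : Set ℝ} (hso : IsOpen s) (hs : s.OrdConnected)
    (hf : ContinuousOn f s) {a t : ℝ} (ha : a ∈ s) (ht : t ∈ s) :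
    HasDerivAt (fun u => ∫ τ in a..u, f τ) (f t) t :=
  intervalIntegral.integral_hasDerivAt_right ((hf.mono (hs.uIcc_subset ha ht)).intervalIntegrable)
    (hf.stronglyMeasurableAtFilter hso t ht) (hf.continuousAt (hso.mem_nhds ht))

lemma HasDerivAt.const_add_zpow_neg {g : ℝ → ℝ} {g' t : ℝ} (h : ℝ) (n : ℕ)
    (hg : HasDerivAt g g' t) (hg0 : g t ≠ 0) :
    HasDerivAt (fun x => h + g x ^ (-(n : ℤ))) (-n * g t ^ (-(n : ℤ)) * g' / g t) t := by
  refine (((hasDerivAt_zpow (-(n : ℤ)) (g t) (Or.inl hg0)).comp t hg).const_add h).congr_deriv ?_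
  rw [zpow_sub_one₀ hg0]
  push_cast
  ring

end ScalarODE

noncomputable def phiCurve {n : ℕ} (y : Fin (n + 2) → ℝ) (r θ : ℝ → ℝ) (t : ℝ) :
    Fin (n + 2) → ℝ :=
  frameVec y (θ t) (r t) √(1 - r t ^ 2) 0

noncomputable def nuCurve {n : ℕ} (y : Fin (n + 2) → ℝ) (r lam θ : ℝ → ℝ) (t : ℝ) :
    Fin (n + 2) → ℝ :=
  frameVec y (θ t) (-(r t * lam t)) (r t ^ 2 * lam t / √(1 - r t ^ 2))
    (deriv r t / √(1 - r t ^ 2))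

section Curves

variable {n k : ℕ} {y : Fin (n + 2) → ℝ} {r lam θ : ℝ → ℝ} {u q : ℝ}

lemma hasDerivAt_sqrt_one_sub_sq (hr : HasDerivAt r q u) (hr1 : r u ^ 2 < 1) :
    HasDerivAt (fun t => √(1 - r t ^ 2)) (-(r u * q) / √(1 - r u ^ 2)) u := by
  refine (((hasDerivAt_const u (1 : ℝ)).fun_sub (hr.fun_pow 2)).sqrt (by linarith)).congr_deriv ?_
  field_simp
  push_cast
  ring

lemma hasDerivAt_phi (hr : HasDerivAt r q u) (hr1 : r u ^ 2 < 1)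
    (hθ : HasDerivAt θ (r u * lam u / (1 - r u ^ 2)) u) :
    HasDerivAt (phiCurve y r θ)
      (frameVec y (θ u) q (-(r u * q) / √(1 - r u ^ 2)) (r u * lam u / √(1 - r u ^ 2))) u := by
  refine (hθ.frameVec hr (hasDerivAt_sqrt_one_sub_sq hr hr1)
    (hasDerivAt_const u 0)).congr_deriv ?_
  have hs2 : √(1 - r u ^ 2) ^ 2 = 1 - r u ^ 2 := sq_sqrt (by linarith)
  have hs0 : √(1 - r u ^ 2) ≠ 0 := (sqrt_pos.2 (by linarith)).ne'
  have hr0 : 1 - r u ^ 2 ≠ 0 := by linarith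
  congr 1
  · ring
  · field_simp
    linear_combination r u * lam u * hs2

lemma hasDerivAt_nu {h lam' : ℝ} (hr : HasDerivAt r (deriv r u) u) (hr1 : r u ^ 2 < 1)
    (hlam : HasDerivAt lam lam' u)
    (hr' : HasDerivAt (deriv r) (-r u * (1 + lam u ^ 2) + n * r u * lam u * (lam u - h)) u)
    (hθ : HasDerivAt θ (r u * lam u / (1 - r u ^ 2)) u)
    (hint : deriv r u ^ 2 + r u ^ 2 * lam u ^ 2 = 1 - r u ^ 2)
    (hlam' : r u * lam' = -n * (lam u - h) * deriv r u) :
    HasDerivAt (nuCurve y r lam θ)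
      ((-(n * h - (n - 1) * lam u)) • frameVec y (θ u) (deriv r u)
        (-(r u * deriv r u) / √(1 - r u ^ 2)) (r u * lam u / √(1 - r u ^ 2))) u := by
  have hs := hasDerivAt_sqrt_one_sub_sq hr hr1
  have hs2 : √(1 - r u ^ 2) ^ 2 = 1 - r u ^ 2 := sq_sqrt (by linarith)
  have hs0 : √(1 - r u ^ 2) ≠ 0 := (sqrt_pos.2 (by linarith)).ne'
  have hr0 : 1 - r u ^ 2 ≠ 0 := by linarith
  refine (hθ.frameVec (hr.fun_mul hlam).fun_neg (((hr.fun_pow 2).fun_mul hlam).fun_div hs hs0)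
    (hr'.fun_div hs hs0)).congr_deriv ?_
  rw [frameVec_smul]
  congr 1
  · linear_combination -hlam'
  · field_simp
    rw [hs2]
    linear_combination (1 - r u ^ 2) ^ 2 * r u * hlam'
  · field_simp
    rw [hs2]
    linear_combination (1 - r u ^ 2) * r u * hint

end Curves

structure IsRadiusProfile (n : ℕ) (h : ℝ) (s : Set ℝ) (r lam : ℝ → ℝ) : Prop where
  differentiableAt : ∀ t ∈ s, DifferentiableAt ℝ r t
  deriv_ne_zero : ∀ t ∈ s, deriv r t ≠ 0
  sq_lt_one : ∀ t ∈ s, r t ^ 2 < 1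
  differentiableAt_lam : ∀ t ∈ s, DifferentiableAt ℝ lam t
  mul_deriv_lam : ∀ t ∈ s, r t * deriv lam t = -n * (lam t - h) * deriv r t
  first_integral : ∀ t ∈ s, deriv r t ^ 2 + r t ^ 2 * lam t ^ 2 = 1 - r t ^ 2

namespace IsRadiusProfile

variable {n : ℕ} {h : ℝ} {s : Set ℝ} {r lam : ℝ → ℝ}

theorem of_div_sqrt {g : ℝ → ℝ} {c : ℝ} (hc : 0 < c)
    (hgdiff : ∀ t ∈ s, DifferentiableAt ℝ g t) (hgpos : ∀ t ∈ s, 0 < g t)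
    (hgc : ∀ t ∈ s, g t < √c) (hg' : ∀ t ∈ s, deriv g t ≠ 0)
    (hode : ∀ t ∈ s, deriv g t ^ 2 = c - g t ^ 2 - g t ^ 2 * (h + g t ^ (-(n : ℤ))) ^ 2)
    (hlam : ∀ t, lam t = h + g t ^ (-(n : ℤ))) (hr : ∀ t, r t = g t / √c) :
    IsRadiusProfile n h s r lam := by
  have hsc : 0 < √c := sqrt_pos.2 hc
  have hrd : ∀ t ∈ s, HasDerivAt r (deriv g t / √c) t := fun t ht => by
    simpa only [← hr] using (hgdiff t ht).hasDerivAt.div_const (√c)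
  have hlamd : ∀ t ∈ s,
      HasDerivAt lam (-n * g t ^ (-(n : ℤ)) * deriv g t / g t) t := fun t ht => by
    simpa only [← hlam] using (hgdiff t ht).hasDerivAt.const_add_zpow_neg h n (hgpos t ht).ne'
  have hg0 : ∀ t ∈ s, g t ≠ 0 := fun t ht => (hgpos t ht).ne'
  refine ⟨fun t ht => (hrd t ht).differentiableAt, fun t ht => ?_, fun t ht => ?_,
    fun t ht => (hlamd t ht).differentiableAt, fun t ht => ?_, fun t ht => ?_⟩
  · rw [(hrd t ht).deriv]
    exact div_ne_zero (hg' t ht) hsc.ne'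
  · have h0 : 0 < r t := hr t ▸ div_pos (hgpos t ht) hsc
    have h1 : r t < 1 := hr t ▸ (div_lt_one hsc).2 (hgc t ht)
    nlinarith
  · rw [(hlamd t ht).deriv, (hrd t ht).deriv, hr, hlam]
    field_simp [hg0 t ht]
    ring
  · rw [(hrd t ht).deriv, hr, hlam, div_pow, div_pow, sq_sqrt hc.le, hode t ht]
    field_simp
    ring

theorem hasDerivAt_deriv (hP : IsRadiusProfile n h s r lam) (hso : IsOpen s)
    (hs : s.OrdConnected) {u : ℝ} (hu : u ∈ s) :
    HasDerivAt (deriv r) (-r u * (1 + lam u ^ 2) + n * r u * lam u * (lam u - h)) u := by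
  have hF : ∀ t ∈ s, DifferentiableAt ℝ (fun x => 1 - r x ^ 2 - r x ^ 2 * lam x ^ 2) t :=
    fun t ht => by
      have := hP.differentiableAt t ht
      have := hP.differentiableAt_lam t ht
      fun_prop
  have hr' := differentiableAt_deriv_of_deriv_sq_eq hs.convex hso hP.differentiableAt
    hP.deriv_ne_zero (fun t ht => by linarith [hP.first_integral t ht]) hF hu
  have key := deriv_mul_deriv_deriv_of_first_integral (hP.differentiableAt u hu)
    (hP.differentiableAt_lam u hu).hasDerivAt hr'.hasDerivAt
    (eventually_of_mem (hso.mem_nhds hu) hP.first_integral)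
  refine hr'.hasDerivAt.congr_deriv (mul_left_cancel₀ (hP.deriv_ne_zero u hu) ?_)
  linear_combination key - r u * lam u * hP.mul_deriv_lam u hu

theorem hasDerivAt_integral (hP : IsRadiusProfile n h s r lam) (hso : IsOpen s)
    (hs : s.OrdConnected) {t₀ u : ℝ} (ht₀ : t₀ ∈ s) (hu : u ∈ s) :
    HasDerivAt (fun t => ∫ τ in t₀..t, r τ * lam τ / (1 - r τ ^ 2))
      (r u * lam u / (1 - r u ^ 2)) u := by
  refine hasDerivAt_integral_of_continuousOn hso hs (fun t ht => ?_) ht₀ hu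
  have hr := (hP.differentiableAt t ht).continuousAt
  have hd : ContinuousAt (fun τ => 1 - r τ ^ 2) t := continuousAt_const.sub (hr.pow 2)
  exact ((hr.mul (hP.differentiableAt_lam t ht).continuousAt).div hd
    (by linarith [hP.sq_lt_one t ht])).continuousWithinAt

end IsRadiusProfile

theorem IsRadiusProfile.phiCurve_nuCurve_identities {n k : ℕ} {h t₀ u : ℝ} {s : Set ℝ}
    {r lam θ : ℝ → ℝ} {y : Fin (n + 2) → ℝ} (hP : IsRadiusProfile n h s r lam) (hso : IsOpen s)
    (hs : s.OrdConnected) (ht₀ : t₀ ∈ s)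
    (hθ : ∀ t, θ t = ∫ τ in t₀..t, r τ * lam τ / (1 - r τ ^ 2))
    (hk : k ≤ n) (hy : ∀ i : Fin (n + 2), ((i : ℕ) = n ∨ (i : ℕ) = n + 1) → y i = 0)
    (hyy : semiForm k y y = 1) (hu : u ∈ s) :
    semiForm k (phiCurve y r θ u) (phiCurve y r θ u) = 1 ∧
      semiForm k (deriv (phiCurve y r θ) u) (deriv (phiCurve y r θ) u) = 1 ∧
      semiForm k (nuCurve y r lam θ u) (nuCurve y r lam θ u) = 1 ∧
      semiForm k (nuCurve y r lam θ u) (deriv (phiCurve y r θ) u) = 0 ∧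
      (∀ v : Fin (n + 2) → ℝ, (∀ i : Fin (n + 2), ((i : ℕ) = n ∨ (i : ℕ) = n + 1) → v i = 0) →
        semiForm k v y = 0 → semiForm k (nuCurve y r lam θ u) v = 0) ∧
      deriv (nuCurve y r lam θ) u = (-(n * h - (n - 1) * lam u)) • deriv (phiCurve y r θ) u := by
  have hr := (hP.differentiableAt u hu).hasDerivAt
  have hθ' : HasDerivAt θ (r u * lam u / (1 - r u ^ 2)) u :=
    funext hθ ▸ hP.hasDerivAt_integral hso hs ht₀ hu
  have hφ' := hasDerivAt_phi (y := y) hr (hP.sq_lt_one u hu) hθ'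
  have hν' := hasDerivAt_nu (y := y) hr (hP.sq_lt_one u hu)
    (hP.differentiableAt_lam u hu).hasDerivAt (hP.hasDerivAt_deriv hso hs hu) hθ'
    (hP.first_integral u hu) (hP.mul_deriv_lam u hu)
  obtain ⟨hφφ, hφ'φ', hνν, hνφ'⟩ :=
    semiForm_frameVec_orthonormal hk hy hyy (hP.sq_lt_one u hu) (hP.first_integral u hu)
  rw [hφ'.deriv, hν'.deriv]
  refine ⟨hφφ, hφ'φ', hνν, hνφ', fun v hv hvy => ?_, rfl⟩
  rw [nuCurve, semiForm_frameVec_left_of_vanishing hk hv, semiForm_comm, hvy, mul_zero]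

/-- Coordinates `n+1` and `n+2` of the paper (1-indexed) are indices `n` and `n+1` here. -/
theorem stmt_5_general (n k : ℕ) (hkn : k ≤ n)
    (h c a₁ a₂ t₀ : ℝ) (hc : 0 < c) (ht₀ : t₀ ∈ Set.Ioo a₁ a₂)
    (g lam r θ : ℝ → ℝ)
    (hgdiff : ∀ t ∈ Set.Ioo a₁ a₂, DifferentiableAt ℝ g t)
    (hgpos : ∀ t ∈ Set.Ioo a₁ a₂, 0 < g t)
    (hgc : ∀ t ∈ Set.Ioo a₁ a₂, g t < Real.sqrt c)
    (hg' : ∀ t ∈ Set.Ioo a₁ a₂, deriv g t ≠ 0)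
    (hode : ∀ t ∈ Set.Ioo a₁ a₂,
      deriv g t ^ 2 = c - g t ^ 2 - g t ^ 2 * (h + g t ^ (-(n : ℤ))) ^ 2)
    (hlam : ∀ t, lam t = h + g t ^ (-(n : ℤ)))
    (hr : ∀ t, r t = g t / Real.sqrt c)
    (hθ : ∀ t, θ t = ∫ τ in t₀..t, r τ * lam τ / (1 - r τ ^ 2))
    (B₂ B₃ : ℝ → Fin (n + 2) → ℝ)
    (hB₂ : ∀ s i, B₂ s i =
      if (i : ℕ) = n then Real.cos s else if (i : ℕ) = n + 1 then Real.sin s else 0)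
    (hB₃ : ∀ s i, B₃ s i =
      if (i : ℕ) = n then -Real.sin s else if (i : ℕ) = n + 1 then Real.cos s else 0) :
    (∀ t ∈ Set.Ioo a₁ a₂, deriv r t ^ 2 + r t ^ 2 * lam t ^ 2 = 1 - r t ^ 2) ∧
    ∀ y : Fin (n + 2) → ℝ,
      (∀ i : Fin (n + 2), ((i : ℕ) = n ∨ (i : ℕ) = n + 1) → y i = 0) →
      semiForm k y y = 1 →
      ∀ φ ν : ℝ → Fin (n + 2) → ℝ,
        (∀ u, φ u = r u • y + Real.sqrt (1 - r u ^ 2) • B₂ (θ u)) →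
        (∀ u, ν u = (-(r u * lam u)) • y
            + (r u ^ 2 * lam u / Real.sqrt (1 - r u ^ 2)) • B₂ (θ u)
            + (deriv r u / Real.sqrt (1 - r u ^ 2)) • B₃ (θ u)) →
        ∀ u ∈ Set.Ioo a₁ a₂,
          semiForm k (φ u) (φ u) = 1 ∧
          semiForm k (deriv φ u) (deriv φ u) = 1 ∧
          semiForm k (ν u) (ν u) = 1 ∧
          semiForm k (ν u) (deriv φ u) = 0 ∧
          (∀ v : Fin (n + 2) → ℝ,
            (∀ i : Fin (n + 2), ((i : ℕ) = n ∨ (i : ℕ) = n + 1) → v i = 0) →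
            semiForm k v y = 0 → semiForm k (ν u) v = 0) ∧
          deriv ν u = (-((n : ℝ) * h - ((n : ℝ) - 1) * lam u)) • deriv φ u := by
  obtain rfl : B₂ = circleVec n := funext fun s => funext (hB₂ s)
  obtain rfl : B₃ = circleTangent n := funext fun s => funext (hB₃ s)
  have hP : IsRadiusProfile n h (Set.Ioo a₁ a₂) r lam :=
    .of_div_sqrt hc hgdiff hgpos hgc hg' hode hlam hr
  refine ⟨hP.first_integral, fun y hy hyy φ ν hφ hν u hu => ?_⟩
  obtain rfl : φ = phiCurve y r θ := funext fun t => by simp [hφ, phiCurve, frameVec]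
  obtain rfl : ν = nuCurve y r lam θ := funext hν
  exact hP.phiCurve_nuCurve_identities isOpen_Ioo Set.ordConnected_Ioo ht₀ hθ hkn hy hyy hu

/-- Theorem 2.10 of the paper (third family of cmc hypersurfaces of `𝕊_k^{n+1}`).
Coordinates `n+1` and `n+2` of the paper (1-indexed) are indices `n` and `n+1` here. -/
theorem stmt_5 (n k : ℕ) (hn : 2 ≤ n) (hkn : k ≤ n)
    (h c a₁ a₂ t₀ : ℝ) (hc : 0 < c) (ht₀ : t₀ ∈ Set.Ioo a₁ a₂)
    (g lam r θ : ℝ → ℝ)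
    (hgdiff : ∀ t ∈ Set.Ioo a₁ a₂, DifferentiableAt ℝ g t)
    (hgpos : ∀ t ∈ Set.Ioo a₁ a₂, 0 < g t)
    (hgc : ∀ t ∈ Set.Ioo a₁ a₂, g t < Real.sqrt c)
    (hg' : ∀ t ∈ Set.Ioo a₁ a₂, deriv g t ≠ 0)
    (hode : ∀ t ∈ Set.Ioo a₁ a₂,
      deriv g t ^ 2 = c - g t ^ 2 - g t ^ 2 * (h + g t ^ (-(n : ℤ))) ^ 2)
    (hlam : ∀ t, lam t = h + g t ^ (-(n : ℤ)))
    (hr : ∀ t, r t = g t / Real.sqrt c)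
    (hθ : ∀ t, θ t = ∫ τ in t₀..t, r τ * lam τ / (1 - r τ ^ 2))
    (B₂ B₃ : ℝ → Fin (n + 2) → ℝ)
    (hB₂ : ∀ s i, B₂ s i =
      if (i : ℕ) = n then Real.cos s else if (i : ℕ) = n + 1 then Real.sin s else 0)
    (hB₃ : ∀ s i, B₃ s i =
      if (i : ℕ) = n then -Real.sin s else if (i : ℕ) = n + 1 then Real.cos s else 0) :
    (∀ t ∈ Set.Ioo a₁ a₂, deriv r t ^ 2 + r t ^ 2 * lam t ^ 2 = 1 - r t ^ 2) ∧
    ∀ y : Fin (n + 2) → ℝ,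
      (∀ i : Fin (n + 2), ((i : ℕ) = n ∨ (i : ℕ) = n + 1) → y i = 0) →
      semiForm k y y = 1 →
      ∀ φ ν : ℝ → Fin (n + 2) → ℝ,
        (∀ u, φ u = r u • y + Real.sqrt (1 - r u ^ 2) • B₂ (θ u)) →
        (∀ u, ν u = (-(r u * lam u)) • y
            + (r u ^ 2 * lam u / Real.sqrt (1 - r u ^ 2)) • B₂ (θ u)
            + (deriv r u / Real.sqrt (1 - r u ^ 2)) • B₃ (θ u)) →
        ∀ u ∈ Set.Ioo a₁ a₂,
          semiForm k (φ u) (φ u) = 1 ∧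
          semiForm k (deriv φ u) (deriv φ u) = 1 ∧
          semiForm k (ν u) (ν u) = 1 ∧
          semiForm k (ν u) (deriv φ u) = 0 ∧
          (∀ v : Fin (n + 2) → ℝ,
            (∀ i : Fin (n + 2), ((i : ℕ) = n ∨ (i : ℕ) = n + 1) → v i = 0) →
            semiForm k v y = 0 → semiForm k (ν u) v = 0) ∧
          deriv ν u = (-((n : ℝ) * h - ((n : ℝ) - 1) * lam u)) • deriv φ u :=
  stmt_5_general n k hkn h c a₁ a₂ t₀ hc ht₀ g lam r θ hgdiff hgpos hgc hg' hode hlam hr hθ B₂ B₃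
    hB₂ hB₃
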